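/- Let m ≥ 5 be odd. Then the Cayley graph Cay(Z_m × Z_8, {±1} × {±1, 4}) can be decomposed into two C_8-factors and one C_m-factor. -/
import Mathlib


open SimpleGraph

/-- `H` is a `C_k`-factor: a 2-regular spanning graph all of whose
connected components have exactly `k` vertices (hence are `k`-cycles). -/
def IsCycleFactor {V : Type*} (H : SimpleGraph V) (k : ℕ) : Prop :=
  (∀ v, (H.neighborSet v).ncard = 2) ∧
  (∀ v, (H.connectedComponentMk v).supp.ncard = k)

/-- `H` is a perfect matching (1-factor): every vertex has exactly one neighbour. -/
def IsOneFactor {V : Type*} (H : SimpleGraph V) : Prop :=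
  ∀ v, (H.neighborSet v).ncard = 1

/-- A partition of the edge set of `G` into cycle factors with prescribed cycle lengths. -/
def CycleDecomp {V : Type*} {k : ℕ} (G : SimpleGraph V) (ℓ : Fin k → ℕ) : Prop :=
  ∃ f : Fin k → SimpleGraph V,
    (∀ i, f i ≤ G ∧ IsCycleFactor (f i) (ℓ i)) ∧
    ∀ e ∈ G.edgeSet, ∃! i, e ∈ (f i).edgeSet

/-- A partition of the edge set of `G` into cycle factors with prescribed cycle
lengths together with one perfect matching. -/
def CycleDecompPM {V : Type*} {k : ℕ} (G : SimpleGraph V) (ℓ : Fin k → ℕ) : Prop :=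
  ∃ (f : Fin k → SimpleGraph V) (M : SimpleGraph V),
    (∀ i, f i ≤ G ∧ IsCycleFactor (f i) (ℓ i)) ∧ M ≤ G ∧ IsOneFactor M ∧
    ∀ e ∈ G.edgeSet,
      ((∃! i, e ∈ (f i).edgeSet) ∧ e ∉ M.edgeSet) ∨
      ((∀ i, e ∉ (f i).edgeSet) ∧ e ∈ M.edgeSet)

/-- The Cayley graph on `ZMod m × ZMod n` with connection set `S`
(symmetrised, loops removed). -/
def cay (m n : ℕ) (S : Set (ZMod m × ZMod n)) : SimpleGraph (ZMod m × ZMod n) :=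
  SimpleGraph.fromRel (fun x y => x - y ∈ S)

open Function


section Cyc
variable {V : Type*} {n : ℕ}

/-- the 2-regular graph given by a "successor" map. -/
def cycG (ρ : V → V) : SimpleGraph V := SimpleGraph.fromRel (fun x y => y = ρ x)

/-- hypotheses making `cycG ρ` a disjoint union of `n`-cycles. -/
structure CycHyp (ρ : V → V) (n : ℕ) (θ : V → ZMod n) : Prop where
  hθ : ∀ x, θ (ρ x) = θ x + 1
  hper : ∀ x, ρ^[n] x = x
  hn : 1 < n
  h2 : (2 : ZMod n) ≠ 0

namespace CycHyp
variable {ρ : V → V} {θ : V → ZMod n} (H : CycHyp ρ n θ)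
include H

lemma theta_iter (k : ℕ) (x : V) : θ (ρ^[k] x) = θ x + k := by
  induction k with
  | zero => simp
  | succ k ih => rw [Function.iterate_succ_apply', H.hθ, ih]; push_cast; ring

lemma one_ne : (1 : ZMod n) ≠ 0 := by
  haveI : Fact (1 < n) := ⟨H.hn⟩; exact one_ne_zero

lemma rho_ne (x : V) : ρ x ≠ x := by
  intro h
  have h2 := H.hθ x
  rw [h, left_eq_add] at h2
  exact H.one_ne h2

lemma rho_rho_ne (x : V) : ρ (ρ x) ≠ x := by
  intro h
  have h2 := H.hθ (ρ x)
  rw [h, H.hθ x] at h2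
  have h3 : (2 : ZMod n) = 0 := by linear_combination -h2
  exact H.h2 h3

lemma rho_rhoi (x : V) : ρ (ρ^[n-1] x) = x := by
  have hn := H.hn
  rw [← Function.iterate_succ_apply' ρ (n-1) x, Nat.succ_eq_add_one,
    Nat.sub_add_cancel (by omega : 1 ≤ n), H.hper]

lemma rhoi_rho (x : V) : ρ^[n-1] (ρ x) = x := by
  have hn := H.hn
  rw [← Function.iterate_succ_apply ρ (n-1) x, Nat.succ_eq_add_one,
    Nat.sub_add_cancel (by omega : 1 ≤ n), H.hper]

lemma adj_iff {x y : V} : (cycG ρ).Adj x y ↔ x ≠ y ∧ (y = ρ x ∨ x = ρ y) :=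
  SimpleGraph.fromRel_adj _ x y

lemma nbhd (x : V) : (cycG ρ).neighborSet x = {ρ x, ρ^[n-1] x} := by
  ext y
  simp only [mem_neighborSet, H.adj_iff, Set.mem_insert_iff, Set.mem_singleton_iff]
  constructor
  · rintro ⟨hne, (rfl | rfl)⟩
    · exact Or.inl rfl
    · right; conv_lhs => rw [← H.rhoi_rho y]
  · rintro (rfl | rfl)
    · exact ⟨fun h => H.rho_ne x h.symm, Or.inl rfl⟩
    · refine ⟨fun h => ?_, Or.inr (H.rho_rhoi x).symm⟩
      have := H.rho_rhoi x
      rw [← h] at this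
      exact H.rho_ne x this
      
lemma deg (x : V) : ((cycG ρ).neighborSet x).ncard = 2 := by
  rw [H.nbhd]
  rw [Set.ncard_pair]
  intro h
  have := congrArg ρ h
  rw [H.rho_rhoi] at this
  exact H.rho_rho_ne x this

lemma orbit_reach (v : V) (k : ℕ) : (cycG ρ).Reachable v (ρ^[k] v) := by
  induction k with
  | zero => exact Reachable.refl v
  | succ k ih =>
      refine ih.trans (Adj.reachable ?_)
      rw [H.adj_iff]
      rw [Function.iterate_succ_apply']
      exact ⟨fun h => H.rho_ne _ h.symm, Or.inl rfl⟩

lemma orbit_closed {v x y : V} (hxy : (cycG ρ).Adj x y)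
    (hx : x ∈ (fun k => ρ^[k] v) '' Set.Iio n) : y ∈ (fun k => ρ^[k] v) '' Set.Iio n := by
  obtain ⟨k, hk, hxk⟩ := hx
  rw [Set.mem_Iio] at hk
  simp only at hxk
  subst hxk
  have hn := H.hn
  rw [H.adj_iff] at hxy
  obtain ⟨hne, (rfl | hy)⟩ := hxy
  · rcases eq_or_lt_of_le (by omega : k + 1 ≤ n) with h | h
    · refine ⟨0, Set.mem_Iio.2 (by omega), ?_⟩
      simp only [Function.iterate_zero_apply]
      rw [← Function.iterate_succ_apply' ρ k v, Nat.succ_eq_add_one, h, H.hper]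
    · refine ⟨k + 1, Set.mem_Iio.2 h, ?_⟩
      simp only
      exact Function.iterate_succ_apply' ρ k v
  · have hy2 : y = ρ^[n-1] (ρ^[k] v) := by
      have h3 := congrArg (ρ^[n-1]) hy
      rw [H.rhoi_rho] at h3
      exact h3.symm
    subst hy2
    rcases Nat.eq_zero_or_pos k with rfl | hk0
    · exact ⟨n - 1, Set.mem_Iio.2 (by omega), rfl⟩
    · refine ⟨k - 1, Set.mem_Iio.2 (by omega), ?_⟩
      simp only
      have h4 : ρ^[n-1] (ρ^[k] v) = ρ^[(n-1) + k] v := by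
        rw [Function.iterate_add_apply]
      rw [h4]
      have h5 : (n-1) + k = (k-1) + n := by omega
      rw [h5, Function.iterate_add_apply, H.hper]

lemma walk_orbit {v : V} : ∀ {x y : V}, (cycG ρ).Walk x y →
    x ∈ (fun k => ρ^[k] v) '' Set.Iio n → y ∈ (fun k => ρ^[k] v) '' Set.Iio n := by
  intro x y p
  induction p with
  | nil => exact id
  | cons h p ih => exact fun hx => ih (H.orbit_closed h hx)

lemma supp_eq (v : V) :
    ((cycG ρ).connectedComponentMk v).supp = (fun k => ρ^[k] v) '' Set.Iio n := by
  ext u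
  rw [SimpleGraph.ConnectedComponent.mem_supp_iff, SimpleGraph.ConnectedComponent.eq]
  constructor
  · intro h
    have hn := H.hn
    obtain ⟨p⟩ := h.symm
    exact H.walk_orbit p ⟨0, by simp; omega, rfl⟩
  · rintro ⟨k, _, rfl⟩
    exact (H.orbit_reach v k).symm

lemma supp_ncard (v : V) : ((cycG ρ).connectedComponentMk v).supp.ncard = n := by
  rw [H.supp_eq]
  rw [Set.ncard_image_of_injOn]
  · have : (Set.Iio n) = ↑(Finset.range n) := by ext k; simp
    rw [this, Set.ncard_coe_finset, Finset.card_range]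
  · intro j hj k hk hjk
    simp only [Set.mem_Iio] at hj hk
    simp only at hjk
    haveI : NeZero n := ⟨by have := H.hn; omega⟩
    have h1 := H.theta_iter j v
    rw [hjk, H.theta_iter k v] at h1
    have h2 : ((j : ℕ) : ZMod n) = ((k : ℕ) : ZMod n) := by linear_combination -h1
    have h3 := congrArg ZMod.val h2
    rw [ZMod.val_natCast, ZMod.val_natCast, Nat.mod_eq_of_lt hj, Nat.mod_eq_of_lt hk] at h3
    exact h3

end CycHyp
end Cyc


section Constr
variable (m : ℕ)

/-- step of the C_m-factor -/
def s0 (a : ZMod m) : ZMod 8 := if a.val ≤ 3 then 1 else 4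

def rho0 (x : ZMod m × ZMod 8) : ZMod m × ZMod 8 := (x.1 + 1, x.2 + s0 m x.1)

def theta0 (x : ZMod m × ZMod 8) : ZMod m := x.1

def rho1 : ZMod m × ZMod 8 → ZMod m × ZMod 8
  | (a, b) =>
    if b.val % 2 = 0 then
      if a.val ≤ 2 then (a + 1, b + 4)
      else if a.val = 3 then (a + 1, b + 7)
      else (a + 1, b + 1)
    else
      if a.val ≤ 1 then (a - 1, b + 1)
      else if a.val ≤ 4 then (a - 1, b + 4)
      else (a - 1, b + 1)

def theta1 : ZMod m × ZMod 8 → ZMod 8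
  | (a, b) =>
    if a.val = 1 ∧ b.val % 2 = 0 then b + 5
    else if a.val = 2 then (if b.val % 2 = 0 then b + 2 else b + 3)
    else if a.val = 3 then (if b.val % 2 = 0 then b + 7 else b + 6)
    else if a.val = 4 ∧ b.val % 2 = 1 then b + 1
    else b

def rho2 : ZMod m × ZMod 8 → ZMod m × ZMod 8
  | (a, b) =>
    if b.val % 2 = 1 then
      if a.val = 2 then (a - 1, b + 1)
      else if a.val = 0 then (a + 1, b + 4)
      else if a.val ≤ 3 then (a + 1, b + 7)
      else (a + 1, b + 1)
    else
      if a.val = 2 then (a + 1, b + 7)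
      else if a.val = 4 then (a - 1, b + 4)
      else (a - 1, b + 1)

def theta2 : ZMod m × ZMod 8 → ZMod 8
  | (a, b) =>
    if a.val = 1 ∧ b.val % 2 = 1 then b + 5
    else if a.val = 2 ∧ b.val % 2 = 0 then b + 7
    else if a.val = 3 ∧ b.val % 2 = 1 then b + 1
    else if a.val = 4 ∧ b.val % 2 = 0 then b + 3
    else b

def T0 (a : ZMod m) : ZMod 8 := (a.val : ZMod 8) + 3 * ((a.val - 4 : ℕ) : ZMod 8)

variable {m} (hm : 5 ≤ m)
include hm

lemma neZ : NeZero m := ⟨by omega⟩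

lemma vadd1 (a : ZMod m) : (a + 1).val = if a.val + 1 = m then 0 else a.val + 1 := by
  haveI : NeZero m := neZ hm
  haveI : Fact (1 < m) := ⟨by omega⟩
  have hv := ZMod.val_lt a
  rw [ZMod.val_add, ZMod.val_one]
  split_ifs with h
  · rw [h, Nat.mod_self]
  · exact Nat.mod_eq_of_lt (by omega)

lemma vsub1 (a : ZMod m) : (a - 1).val = if a.val = 0 then m - 1 else a.val - 1 := by
  haveI : NeZero m := neZ hm
  have hv := ZMod.val_lt a
  split_ifs with h
  · have ha : a = 0 := by
      have := ZMod.natCast_zmod_val a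
      rw [h] at this; simpa using this.symm
    subst ha
    have : (0 : ZMod m) - 1 = ((m - 1 : ℕ) : ZMod m) := by
      push_cast [Nat.cast_sub (by omega : 1 ≤ m)]
      simp [ZMod.natCast_self]
    rw [this, ZMod.val_cast_of_lt (by omega)]
  · have ha : a - 1 = ((a.val - 1 : ℕ) : ZMod m) := by
      conv_lhs => rw [← ZMod.natCast_zmod_val a]
      push_cast [Nat.cast_sub (by omega : 1 ≤ a.val)]
      ring
    rw [ha, ZMod.val_cast_of_lt (by omega)]

lemma vlit {k : ℕ} (hk : k < m) : ((k : ℕ) : ZMod m).val = k := by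
  haveI : NeZero m := neZ hm
  exact ZMod.val_cast_of_lt hk

lemma v0 : (0 : ZMod m).val = 0 := by simpa using vlit hm (show 0 < m by omega)
lemma v1 : (1 : ZMod m).val = 1 := by simpa using vlit hm (show 1 < m by omega)
lemma v2 : (2 : ZMod m).val = 2 := by
  have := vlit hm (show 2 < m by omega); push_cast at this; exact this
lemma v3 : (3 : ZMod m).val = 3 := by
  have := vlit hm (show 3 < m by omega); push_cast at this; exact this
lemma v4 : (4 : ZMod m).val = 4 := by
  have := vlit hm (show 4 < m by omega); push_cast at this; exact this

lemma aeq {a : ZMod m} {k : ℕ} (h : a.val = k) : a = (k : ZMod m) := by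
  haveI : NeZero m := neZ hm
  rw [← h, ZMod.natCast_zmod_val]

lemma two_ne : (2 : ZMod m) ≠ 0 := by
  intro h
  haveI : NeZero m := neZ hm
  have h2 := congrArg ZMod.val h
  rw [v2 hm, ZMod.val_zero] at h2
  omega

end Constr

lemma padd : ∀ e t : ZMod 8, (e + t).val % 2 = (e.val + t.val) % 2 := by decide
section Evals
variable {m : ℕ} (hm : 5 ≤ m)

lemma r1_even_lo {a : ZMod m} {b : ZMod 8} (hb : b.val % 2 = 0) (ha : a.val ≤ 2) :
    rho1 m (a, b) = (a + 1, b + 4) := by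
  simp only [rho1]; rw [if_pos hb, if_pos ha]

lemma r1_even_3 {a : ZMod m} {b : ZMod 8} (hb : b.val % 2 = 0) (ha : a.val = 3) :
    rho1 m (a, b) = (a + 1, b + 7) := by
  simp only [rho1]; rw [if_pos hb, if_neg (by omega), if_pos ha]

lemma r1_even_hi {a : ZMod m} {b : ZMod 8} (hb : b.val % 2 = 0) (ha : 4 ≤ a.val) :
    rho1 m (a, b) = (a + 1, b + 1) := by
  simp only [rho1]; rw [if_pos hb, if_neg (by omega), if_neg (by omega)]

lemma r1_odd_lo {a : ZMod m} {b : ZMod 8} (hb : b.val % 2 = 1) (ha : a.val ≤ 1) :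
    rho1 m (a, b) = (a - 1, b + 1) := by
  simp only [rho1]; rw [if_neg (by omega), if_pos ha]

lemma r1_odd_mid {a : ZMod m} {b : ZMod 8} (hb : b.val % 2 = 1) (ha : 2 ≤ a.val) (ha2 : a.val ≤ 4) :
    rho1 m (a, b) = (a - 1, b + 4) := by
  simp only [rho1]; rw [if_neg (by omega), if_neg (by omega), if_pos ha2]

lemma r1_odd_hi {a : ZMod m} {b : ZMod 8} (hb : b.val % 2 = 1) (ha : 5 ≤ a.val) :
    rho1 m (a, b) = (a - 1, b + 1) := by
  simp only [rho1]; rw [if_neg (by omega), if_neg (by omega), if_neg (by omega)]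

lemma r2_odd_2 {a : ZMod m} {b : ZMod 8} (hb : b.val % 2 = 1) (ha : a.val = 2) :
    rho2 m (a, b) = (a - 1, b + 1) := by
  simp only [rho2]; rw [if_pos hb, if_pos ha]

lemma r2_odd_0 {a : ZMod m} {b : ZMod 8} (hb : b.val % 2 = 1) (ha : a.val = 0) :
    rho2 m (a, b) = (a + 1, b + 4) := by
  simp only [rho2]; rw [if_pos hb, if_neg (by omega), if_pos ha]

lemma r2_odd_13 {a : ZMod m} {b : ZMod 8} (hb : b.val % 2 = 1) (ha : a.val = 1 ∨ a.val = 3) :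
    rho2 m (a, b) = (a + 1, b + 7) := by
  simp only [rho2]; rw [if_pos hb, if_neg (by omega), if_neg (by omega), if_pos (by omega)]

lemma r2_odd_hi {a : ZMod m} {b : ZMod 8} (hb : b.val % 2 = 1) (ha : 4 ≤ a.val) :
    rho2 m (a, b) = (a + 1, b + 1) := by
  simp only [rho2]; rw [if_pos hb, if_neg (by omega), if_neg (by omega), if_neg (by omega)]

lemma r2_even_2 {a : ZMod m} {b : ZMod 8} (hb : b.val % 2 = 0) (ha : a.val = 2) :
    rho2 m (a, b) = (a + 1, b + 7) := by
  simp only [rho2]; rw [if_neg (by omega), if_pos ha]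

lemma r2_even_4 {a : ZMod m} {b : ZMod 8} (hb : b.val % 2 = 0) (ha : a.val = 4) :
    rho2 m (a, b) = (a - 1, b + 4) := by
  simp only [rho2]; rw [if_neg (by omega), if_neg (by omega), if_pos ha]

lemma r2_even_oth {a : ZMod m} {b : ZMod 8} (hb : b.val % 2 = 0) (ha : a.val ≠ 2) (ha2 : a.val ≠ 4) :
    rho2 m (a, b) = (a - 1, b + 1) := by
  simp only [rho2]; rw [if_neg (by omega), if_neg ha, if_neg ha2]

lemma t1_gen {a : ZMod m} {b : ZMod 8} (h1 : ¬(a.val = 1 ∧ b.val % 2 = 0))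
    (h2 : a.val ≠ 2) (h3 : a.val ≠ 3) (h4 : ¬(a.val = 4 ∧ b.val % 2 = 1)) :
    theta1 m (a, b) = b := by
  simp only [theta1]; rw [if_neg h1, if_neg h2, if_neg h3, if_neg h4]

lemma t1_1e {a : ZMod m} {b : ZMod 8} (ha : a.val = 1) (hb : b.val % 2 = 0) :
    theta1 m (a, b) = b + 5 := by
  simp only [theta1]; rw [if_pos ⟨ha, hb⟩]

lemma t1_2e {a : ZMod m} {b : ZMod 8} (ha : a.val = 2) (hb : b.val % 2 = 0) :
    theta1 m (a, b) = b + 2 := by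
  simp only [theta1]; rw [if_neg (by omega), if_pos ha, if_pos hb]

lemma t1_2o {a : ZMod m} {b : ZMod 8} (ha : a.val = 2) (hb : b.val % 2 = 1) :
    theta1 m (a, b) = b + 3 := by
  simp only [theta1]; rw [if_neg (by omega), if_pos ha, if_neg (by omega)]

lemma t1_3e {a : ZMod m} {b : ZMod 8} (ha : a.val = 3) (hb : b.val % 2 = 0) :
    theta1 m (a, b) = b + 7 := by
  simp only [theta1]; rw [if_neg (by omega), if_neg (by omega), if_pos ha, if_pos hb]

lemma t1_3o {a : ZMod m} {b : ZMod 8} (ha : a.val = 3) (hb : b.val % 2 = 1) :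
    theta1 m (a, b) = b + 6 := by
  simp only [theta1]; rw [if_neg (by omega), if_neg (by omega), if_pos ha, if_neg (by omega)]

lemma t1_4o {a : ZMod m} {b : ZMod 8} (ha : a.val = 4) (hb : b.val % 2 = 1) :
    theta1 m (a, b) = b + 1 := by
  simp only [theta1]; rw [if_neg (by omega), if_neg (by omega), if_neg (by omega), if_pos ⟨ha, hb⟩]

lemma t2_gen {a : ZMod m} {b : ZMod 8} (h1 : ¬(a.val = 1 ∧ b.val % 2 = 1))
    (h2 : ¬(a.val = 2 ∧ b.val % 2 = 0)) (h3 : ¬(a.val = 3 ∧ b.val % 2 = 1))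
    (h4 : ¬(a.val = 4 ∧ b.val % 2 = 0)) :
    theta2 m (a, b) = b := by
  simp only [theta2]; rw [if_neg h1, if_neg h2, if_neg h3, if_neg h4]

lemma t2_1o {a : ZMod m} {b : ZMod 8} (ha : a.val = 1) (hb : b.val % 2 = 1) :
    theta2 m (a, b) = b + 5 := by
  simp only [theta2]; rw [if_pos ⟨ha, hb⟩]

lemma t2_2e {a : ZMod m} {b : ZMod 8} (ha : a.val = 2) (hb : b.val % 2 = 0) :
    theta2 m (a, b) = b + 7 := by
  simp only [theta2]; rw [if_neg (by omega), if_pos ⟨ha, hb⟩]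

lemma t2_3o {a : ZMod m} {b : ZMod 8} (ha : a.val = 3) (hb : b.val % 2 = 1) :
    theta2 m (a, b) = b + 1 := by
  simp only [theta2]; rw [if_neg (by omega), if_neg (by omega), if_pos ⟨ha, hb⟩]

lemma t2_4e {a : ZMod m} {b : ZMod 8} (ha : a.val = 4) (hb : b.val % 2 = 0) :
    theta2 m (a, b) = b + 3 := by
  simp only [theta2]; rw [if_neg (by omega), if_neg (by omega), if_neg (by omega), if_pos ⟨ha, hb⟩]

end Evals
lemma p1 : ∀ b : ZMod 8, (b+1).val % 2 = (b.val + 1) % 2 := by decide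
lemma p4 : ∀ b : ZMod 8, (b+4).val % 2 = b.val % 2 := by decide
lemma p7 : ∀ b : ZMod 8, (b+7).val % 2 = (b.val + 1) % 2 := by decide

section Thetas
variable {m : ℕ}

lemma htheta1 (hm : 5 ≤ m) : ∀ x, theta1 m (rho1 m x) = theta1 m x + 1 := by
  haveI : NeZero m := neZ hm
  rintro ⟨a, b⟩
  have hav := ZMod.val_lt a
  have hA := vadd1 hm a
  have hS := vsub1 hm a
  rcases (show b.val % 2 = 0 ∨ b.val % 2 = 1 by omega) with hb | hb
  · rcases (show a.val = 0 ∨ a.val = 1 ∨ a.val = 2 ∨ a.val = 3 ∨ a.val = 4 ∨ 5 ≤ a.val by omega)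
      with ha|ha|ha|ha|ha|ha
    · rw [r1_even_lo hb (by omega), t1_1e (by rw [hA, if_neg (by omega)]; omega)
        (by rw [p4]; omega), t1_gen (by omega) (by omega) (by omega) (by omega)]
      exact (by decide : ∀ c : ZMod 8, c + 4 + 5 = c + 1) b
    · rw [r1_even_lo hb (by omega), t1_2e (by rw [hA, if_neg (by omega)]; omega)
        (by rw [p4]; omega), t1_1e ha hb]
      exact (by decide : ∀ c : ZMod 8, c + 4 + 2 = c + 5 + 1) b
    · rw [r1_even_lo hb (by omega), t1_3e (by rw [hA, if_neg (by omega)]; omega)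
        (by rw [p4]; omega), t1_2e ha hb]
      exact (by decide : ∀ c : ZMod 8, c + 4 + 7 = c + 2 + 1) b
    · rw [r1_even_3 hb ha, t1_4o (by rw [hA, if_neg (by omega)]; omega)
        (by rw [p7]; omega), t1_3e ha hb]
    · have hA1 : (a+1).val = 0 ∨ (a+1).val = a.val + 1 := by
        rw [hA]; split_ifs <;> simp
      have hp : (b+1).val % 2 = 1 := by rw [p1]; omega
      rw [r1_even_hi hb (by omega), t1_gen (by omega) (by omega) (by omega) (by omega),
        t1_gen (by omega) (by omega) (by omega) (by omega)]
    · have hA1 : (a+1).val = 0 ∨ (a+1).val = a.val + 1 := by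
        rw [hA]; split_ifs <;> simp
      have hp : (b+1).val % 2 = 1 := by rw [p1]; omega
      rw [r1_even_hi hb (by omega), t1_gen (by omega) (by omega) (by omega) (by omega),
        t1_gen (by omega) (by omega) (by omega) (by omega)]
  · rcases (show a.val = 0 ∨ a.val = 1 ∨ a.val = 2 ∨ a.val = 3 ∨ a.val = 4 ∨ 5 ≤ a.val by omega)
      with ha|ha|ha|ha|ha|ha
    · have hS1 : (a-1).val = m - 1 := by rw [hS, if_pos ha]
      have hp : (b+1).val % 2 = 0 := by rw [p1]; omega
      rw [r1_odd_lo hb (by omega), t1_gen (by omega) (by omega) (by omega) (by omega),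
        t1_gen (by omega) (by omega) (by omega) (by omega)]
    · have hS1 : (a-1).val = 0 := by rw [hS, if_neg (by omega)]; omega
      have hp : (b+1).val % 2 = 0 := by rw [p1]; omega
      rw [r1_odd_lo hb (by omega), t1_gen (by omega) (by omega) (by omega) (by omega),
        t1_gen (by omega) (by omega) (by omega) (by omega)]
    · have hS1 : (a-1).val = 1 := by rw [hS, if_neg (by omega)]; omega
      have hp : (b+4).val % 2 = 1 := by rw [p4]; omega
      rw [r1_odd_mid hb (by omega) (by omega), t1_gen (by omega) (by omega) (by omega) (by omega),
        t1_2o ha hb]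
      exact (by decide : ∀ c : ZMod 8, c + 4 = c + 3 + 1) b
    · have hS1 : (a-1).val = 2 := by rw [hS, if_neg (by omega)]; omega
      rw [r1_odd_mid hb (by omega) (by omega), t1_2o hS1 (by rw [p4]; omega), t1_3o ha hb]
      exact (by decide : ∀ c : ZMod 8, c + 4 + 3 = c + 6 + 1) b
    · have hS1 : (a-1).val = 3 := by rw [hS, if_neg (by omega)]; omega
      rw [r1_odd_mid hb (by omega) (by omega), t1_3o hS1 (by rw [p4]; omega), t1_4o ha hb]
      exact (by decide : ∀ c : ZMod 8, c + 4 + 6 = c + 1 + 1) b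
    · have hS1 : (a-1).val = a.val - 1 := by rw [hS, if_neg (by omega)]
      have hp : (b+1).val % 2 = 0 := by rw [p1]; omega
      rw [r1_odd_hi hb (by omega), t1_gen (by omega) (by omega) (by omega) (by omega),
        t1_gen (by omega) (by omega) (by omega) (by omega)]

lemma htheta2 (hm : 5 ≤ m) : ∀ x, theta2 m (rho2 m x) = theta2 m x + 1 := by
  haveI : NeZero m := neZ hm
  rintro ⟨a, b⟩
  have hav := ZMod.val_lt a
  have hA := vadd1 hm a
  have hS := vsub1 hm a
  rcases (show b.val % 2 = 1 ∨ b.val % 2 = 0 by omega) with hb | hb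
  · rcases (show a.val = 0 ∨ a.val = 1 ∨ a.val = 2 ∨ a.val = 3 ∨ a.val = 4 ∨ 5 ≤ a.val by omega)
      with ha|ha|ha|ha|ha|ha
    · rw [r2_odd_0 hb ha, t2_1o (by rw [hA, if_neg (by omega)]; omega) (by rw [p4]; omega),
        t2_gen (by omega) (by omega) (by omega) (by omega)]
      exact (by decide : ∀ c : ZMod 8, c + 4 + 5 = c + 1) b
    · rw [r2_odd_13 hb (Or.inl ha), t2_2e (by rw [hA, if_neg (by omega)]; omega)
        (by rw [p7]; omega), t2_1o ha hb]
      exact (by decide : ∀ c : ZMod 8, c + 7 + 7 = c + 5 + 1) b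
    · have hS1 : (a-1).val = 1 := by rw [hS, if_neg (by omega)]; omega
      have hp : (b+1).val % 2 = 0 := by rw [p1]; omega
      rw [r2_odd_2 hb ha, t2_gen (by omega) (by omega) (by omega) (by omega),
        t2_gen (by omega) (by omega) (by omega) (by omega)]
    · rw [r2_odd_13 hb (Or.inr ha), t2_4e (by rw [hA, if_neg (by omega)]; omega)
        (by rw [p7]; omega), t2_3o ha hb]
      exact (by decide : ∀ c : ZMod 8, c + 7 + 3 = c + 1 + 1) b
    · have hA1 : (a+1).val = 0 ∨ (a+1).val = a.val + 1 := by
        rw [hA]; split_ifs <;> simp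
      have hp : (b+1).val % 2 = 0 := by rw [p1]; omega
      rw [r2_odd_hi hb (by omega), t2_gen (by omega) (by omega) (by omega) (by omega),
        t2_gen (by omega) (by omega) (by omega) (by omega)]
    · have hA1 : (a+1).val = 0 ∨ (a+1).val = a.val + 1 := by
        rw [hA]; split_ifs <;> simp
      have hp : (b+1).val % 2 = 0 := by rw [p1]; omega
      rw [r2_odd_hi hb (by omega), t2_gen (by omega) (by omega) (by omega) (by omega),
        t2_gen (by omega) (by omega) (by omega) (by omega)]
  · rcases (show a.val = 0 ∨ a.val = 1 ∨ a.val = 2 ∨ a.val = 3 ∨ a.val = 4 ∨ 5 ≤ a.val by omega)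
      with ha|ha|ha|ha|ha|ha
    · have hS1 : (a-1).val = m - 1 := by rw [hS, if_pos ha]
      have hp : (b+1).val % 2 = 1 := by rw [p1]; omega
      rw [r2_even_oth hb (by omega) (by omega), t2_gen (by omega) (by omega) (by omega) (by omega),
        t2_gen (by omega) (by omega) (by omega) (by omega)]
    · have hS1 : (a-1).val = 0 := by rw [hS, if_neg (by omega)]; omega
      have hp : (b+1).val % 2 = 1 := by rw [p1]; omega
      rw [r2_even_oth hb (by omega) (by omega), t2_gen (by omega) (by omega) (by omega) (by omega),
        t2_gen (by omega) (by omega) (by omega) (by omega)]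
    · rw [r2_even_2 hb ha, t2_3o (by rw [hA, if_neg (by omega)]; omega) (by rw [p7]; omega),
        t2_2e ha hb]
    · have hS1 : (a-1).val = 2 := by rw [hS, if_neg (by omega)]; omega
      have hp : (b+1).val % 2 = 1 := by rw [p1]; omega
      rw [r2_even_oth hb (by omega) (by omega), t2_gen (by omega) (by omega) (by omega) (by omega),
        t2_gen (by omega) (by omega) (by omega) (by omega)]
    · have hS1 : (a-1).val = 3 := by rw [hS, if_neg (by omega)]; omega
      rw [r2_even_4 hb ha, t2_gen (by omega) (by omega) (by rw [p4]; omega) (by omega), t2_4e ha hb]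
      exact (by decide : ∀ c : ZMod 8, c + 4 = c + 3 + 1) b
    · have hS1 : (a-1).val = a.val - 1 := by rw [hS, if_neg (by omega)]
      have hp : (b+1).val % 2 = 1 := by rw [p1]; omega
      rw [r2_even_oth hb (by omega) (by omega), t2_gen (by omega) (by omega) (by omega) (by omega),
        t2_gen (by omega) (by omega) (by omega) (by omega)]

end Thetas
lemma iter_per {α : Type*} {f : α → α} {n k : ℕ} {v : α} (h : f^[n] v = v) :
    f^[n] (f^[k] v) = f^[k] v := by
  rw [← Function.iterate_add_apply, Nat.add_comm, Function.iterate_add_apply, h]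

lemma per_transport {α : Type*} {f : α → α} {n k : ℕ} {v x : α}
    (hv : f^[n] v = v) (hx : f^[k] v = x) : f^[n] x = x := by
  subst hx; exact iter_per hv

section Tzero
variable {m : ℕ}

lemma Trec (hm : 5 ≤ m) (hmo : Odd m) (a : ZMod m) : T0 m (a + 1) = T0 m a + s0 m a := by
  haveI : NeZero m := neZ hm
  have hav := ZMod.val_lt a
  have hA := vadd1 hm a
  unfold T0 s0
  rcases (show a.val + 1 = m ∨ a.val + 1 < m by omega) with h | h
  · rw [hA, if_pos h, if_neg (by omega)]
    obtain ⟨k, hk⟩ := hmo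
    have hk2 : 2 ≤ k := by omega
    have hv : a.val = 2 * k := by omega
    rw [hv, show (2 * k - 4 : ℕ) = 2 * (k - 2) from by omega,
      show ((0:ℕ) - 4 : ℕ) = 0 from rfl]
    have hcast : ((2 * (k - 2) : ℕ) : ZMod 8) = 2 * ((k : ZMod 8) - 2) := by
      push_cast [Nat.cast_sub hk2]; ring
    rw [hcast]
    push_cast
    have h8 : (8 : ZMod 8) = 0 := by decide
    linear_combination (1 - (k : ZMod 8)) * h8
  · rw [hA, if_neg (by omega)]
    rcases (show a.val ≤ 3 ∨ 4 ≤ a.val by omega) with h2 | h2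
    · rw [if_pos h2]
      have e1 : a.val + 1 - 4 = 0 := by omega
      have e2 : a.val - 4 = 0 := by omega
      rw [e1, e2]
      push_cast
      ring
    · rw [if_neg (by omega)]
      have e1 : a.val + 1 - 4 = (a.val - 4) + 1 := by omega
      rw [e1]
      push_cast
      ring

lemma iter0 (hm : 5 ≤ m) (hmo : Odd m) (k : ℕ) (a : ZMod m) (b : ZMod 8) :
    (rho0 m)^[k] (a, b) = (a + k, b + (T0 m (a + k) - T0 m a)) := by
  induction k with
  | zero => simp
  | succ k ih =>
      rw [Function.iterate_succ_apply', ih]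
      show (a + k + 1, b + (T0 m (a + k) - T0 m a) + s0 m (a + k)) = _
      have h1 := Trec hm hmo (a + (k : ZMod m))
      have hc : ((k + 1 : ℕ) : ZMod m) = (k : ZMod m) + 1 := by push_cast; ring
      rw [Prod.mk.injEq]
      constructor
      · rw [hc]; ring
      · rw [hc, ← add_assoc, h1]; ring

lemma hper0 (hm : 5 ≤ m) (hmo : Odd m) : ∀ x, (rho0 m)^[m] x = x := by
  haveI : NeZero m := neZ hm
  rintro ⟨a, b⟩
  rw [iter0 hm hmo, ZMod.natCast_self]
  simp

end Tzero
lemma p2 : ∀ b : ZMod 8, (b+2).val % 2 = b.val % 2 := by decide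
lemma p3 : ∀ b : ZMod 8, (b+3).val % 2 = (b.val + 1) % 2 := by decide
lemma p5 : ∀ b : ZMod 8, (b+5).val % 2 = (b.val + 1) % 2 := by decide
lemma p6 : ∀ b : ZMod 8, (b+6).val % 2 = b.val % 2 := by decide

lemma iter8 {α : Type*} {f : α → α} {x0 x1 x2 x3 x4 x5 x6 x7 : α}
    (h0 : f x0 = x1) (h1 : f x1 = x2) (h2 : f x2 = x3) (h3 : f x3 = x4)
    (h4 : f x4 = x5) (h5 : f x5 = x6) (h6 : f x6 = x7) (h7 : f x7 = x0) :
    f^[8] x0 = x0 ∧ f^[1] x0 = x1 ∧ f^[2] x0 = x2 ∧ f^[3] x0 = x3 ∧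
      f^[4] x0 = x4 ∧ f^[5] x0 = x5 ∧ f^[6] x0 = x6 ∧ f^[7] x0 = x7 := by
  have i1 : f^[1] x0 = x1 := by simpa using h0
  have i2 : f^[2] x0 = x2 := by
    rw [show (2:ℕ) = 1+1 from rfl, Function.iterate_succ_apply', i1, h1]
  have i3 : f^[3] x0 = x3 := by
    rw [show (3:ℕ) = 2+1 from rfl, Function.iterate_succ_apply', i2, h2]
  have i4 : f^[4] x0 = x4 := by
    rw [show (4:ℕ) = 3+1 from rfl, Function.iterate_succ_apply', i3, h3]
  have i5 : f^[5] x0 = x5 := by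
    rw [show (5:ℕ) = 4+1 from rfl, Function.iterate_succ_apply', i4, h4]
  have i6 : f^[6] x0 = x6 := by
    rw [show (6:ℕ) = 5+1 from rfl, Function.iterate_succ_apply', i5, h5]
  have i7 : f^[7] x0 = x7 := by
    rw [show (7:ℕ) = 6+1 from rfl, Function.iterate_succ_apply', i6, h6]
  have i8 : f^[8] x0 = x0 := by
    rw [show (8:ℕ) = 7+1 from rfl, Function.iterate_succ_apply', i7, h7]
  exact ⟨i8, i1, i2, i3, i4, i5, i6, i7⟩

section Chains
variable {m : ℕ}

lemma chain1 (hm : 5 ≤ m) (e : ZMod 8) (he : e.val % 2 = 0) :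
    (rho1 m)^[8] ((0 : ZMod m), e) = (0, e) ∧
    (rho1 m)^[1] ((0 : ZMod m), e) = (1, e+4) ∧
    (rho1 m)^[2] ((0 : ZMod m), e) = (2, e) ∧
    (rho1 m)^[3] ((0 : ZMod m), e) = (3, e+4) ∧
    (rho1 m)^[4] ((0 : ZMod m), e) = (4, e+3) ∧
    (rho1 m)^[5] ((0 : ZMod m), e) = (3, e+7) ∧
    (rho1 m)^[6] ((0 : ZMod m), e) = (2, e+3) ∧
    (rho1 m)^[7] ((0 : ZMod m), e) = (1, e+7) := by
  refine iter8 ?_ ?_ ?_ ?_ ?_ ?_ ?_ ?_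
  · rw [r1_even_lo he (by rw [v0 hm] <;> try omega)]
    rw [Prod.mk.injEq]; exact ⟨by norm_num, rfl⟩
  · rw [r1_even_lo (by rw [p4]; omega) (by rw [v1 hm] <;> try omega)]
    rw [Prod.mk.injEq]
    exact ⟨by norm_num, (by decide : ∀ c : ZMod 8, c+4+4 = c) e⟩
  · rw [r1_even_lo he (by rw [v2 hm] <;> try omega)]
    rw [Prod.mk.injEq]; exact ⟨by norm_num, rfl⟩
  · rw [r1_even_3 (by rw [p4]; omega) (v3 hm)]
    rw [Prod.mk.injEq]
    exact ⟨by norm_num, (by decide : ∀ c : ZMod 8, c+4+7 = c+3) e⟩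
  · rw [r1_odd_mid (by rw [p3]; omega) (by rw [v4 hm] <;> try omega) (by rw [v4 hm] <;> try omega)]
    rw [Prod.mk.injEq]
    exact ⟨by norm_num, (by decide : ∀ c : ZMod 8, c+3+4 = c+7) e⟩
  · rw [r1_odd_mid (by rw [p7]; omega) (by rw [v3 hm] <;> try omega) (by rw [v3 hm] <;> try omega)]
    rw [Prod.mk.injEq]
    exact ⟨by norm_num, (by decide : ∀ c : ZMod 8, c+7+4 = c+3) e⟩
  · rw [r1_odd_mid (by rw [p3]; omega) (by rw [v2 hm] <;> try omega) (by rw [v2 hm] <;> try omega)]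
    rw [Prod.mk.injEq]
    exact ⟨by norm_num, (by decide : ∀ c : ZMod 8, c+3+4 = c+7) e⟩
  · rw [r1_odd_lo (by rw [p7]; omega) (by rw [v1 hm] <;> try omega)]
    rw [Prod.mk.injEq]
    exact ⟨by norm_num, (by decide : ∀ c : ZMod 8, c+7+1 = c) e⟩

lemma chain2 (hm : 5 ≤ m) (e : ZMod 8) (he : e.val % 2 = 1) :
    (rho2 m)^[8] ((0 : ZMod m), e) = (0, e) ∧
    (rho2 m)^[1] ((0 : ZMod m), e) = (1, e+4) ∧
    (rho2 m)^[2] ((0 : ZMod m), e) = (2, e+3) ∧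
    (rho2 m)^[3] ((0 : ZMod m), e) = (3, e+2) ∧
    (rho2 m)^[4] ((0 : ZMod m), e) = (4, e+1) ∧
    (rho2 m)^[5] ((0 : ZMod m), e) = (3, e+5) ∧
    (rho2 m)^[6] ((0 : ZMod m), e) = (2, e+6) ∧
    (rho2 m)^[7] ((0 : ZMod m), e) = (1, e+7) := by
  refine iter8 ?_ ?_ ?_ ?_ ?_ ?_ ?_ ?_
  · rw [r2_odd_0 he (v0 hm)]
    rw [Prod.mk.injEq]; exact ⟨by norm_num, rfl⟩
  · rw [r2_odd_13 (by rw [p4]; omega) (Or.inl (v1 hm))]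
    rw [Prod.mk.injEq]
    exact ⟨by norm_num, (by decide : ∀ c : ZMod 8, c+4+7 = c+3) e⟩
  · rw [r2_even_2 (by rw [p3]; omega) (v2 hm)]
    rw [Prod.mk.injEq]
    exact ⟨by norm_num, (by decide : ∀ c : ZMod 8, c+3+7 = c+2) e⟩
  · rw [r2_odd_13 (by rw [p2]; omega) (Or.inr (v3 hm))]
    rw [Prod.mk.injEq]
    exact ⟨by norm_num, (by decide : ∀ c : ZMod 8, c+2+7 = c+1) e⟩
  · rw [r2_even_4 (by rw [p1]; omega) (v4 hm)]
    rw [Prod.mk.injEq]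
    exact ⟨by norm_num, (by decide : ∀ c : ZMod 8, c+1+4 = c+5) e⟩
  · rw [r2_even_oth (by rw [p5]; omega) (by rw [v3 hm] <;> try omega) (by rw [v3 hm] <;> try omega)]
    rw [Prod.mk.injEq]
    exact ⟨by norm_num, (by decide : ∀ c : ZMod 8, c+5+1 = c+6) e⟩
  · rw [r2_odd_2 (by rw [p6]; omega) (v2 hm)]
    rw [Prod.mk.injEq]
    exact ⟨by norm_num, (by decide : ∀ c : ZMod 8, c+6+1 = c+7) e⟩
  · rw [r2_even_oth (by rw [p7]; omega) (by rw [v1 hm] <;> try omega) (by rw [v1 hm] <;> try omega)]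
    rw [Prod.mk.injEq]
    exact ⟨by norm_num, (by decide : ∀ c : ZMod 8, c+7+1 = c) e⟩

end Chains
section Pers
variable {m : ℕ}

lemma nstep1 (hm : 5 ≤ m) (a : ZMod m) (b : ZMod 8) (ha : 4 ≤ a.val) (hb : b.val % 2 = 0) :
    (rho1 m)^[2] (a, b) = (a, b + 2) := by
  haveI : NeZero m := neZ hm
  have h2 : (rho1 m)^[2] (a,b) = rho1 m (rho1 m (a,b)) := by
    rw [show (2:ℕ) = 1+1 from rfl, Function.iterate_succ_apply', Function.iterate_one]
  rw [h2, r1_even_hi hb ha]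
  have hA := vadd1 hm a
  have hav := ZMod.val_lt a
  have hp : (b+1).val % 2 = 1 := by rw [p1]; omega
  rcases (show (a+1).val ≤ 1 ∨ 5 ≤ (a+1).val by rw [hA]; split_ifs <;> omega) with h | h
  · rw [r1_odd_lo hp h, Prod.mk.injEq]
    exact ⟨by ring, by ring⟩
  · rw [r1_odd_hi hp h, Prod.mk.injEq]
    exact ⟨by ring, by ring⟩

lemma nstep2 (hm : 5 ≤ m) (a : ZMod m) (b : ZMod 8) (ha : 4 ≤ a.val) (hb : b.val % 2 = 1) :
    (rho2 m)^[2] (a, b) = (a, b + 2) := by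
  haveI : NeZero m := neZ hm
  have h2 : (rho2 m)^[2] (a,b) = rho2 m (rho2 m (a,b)) := by
    rw [show (2:ℕ) = 1+1 from rfl, Function.iterate_succ_apply', Function.iterate_one]
  rw [h2, r2_odd_hi hb ha]
  have hA := vadd1 hm a
  have hav := ZMod.val_lt a
  have hp : (b+1).val % 2 = 0 := by rw [p1]; omega
  have hne : (a+1).val ≠ 2 ∧ (a+1).val ≠ 4 := by rw [hA]; split_ifs <;> omega
  rw [r2_even_oth hp hne.1 hne.2, Prod.mk.injEq]
  exact ⟨by ring, by ring⟩

lemma norm1 (hm : 5 ≤ m) (a : ZMod m) (b : ZMod 8) (ha : 4 ≤ a.val) (hb : b.val % 2 = 0) :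
    (rho1 m)^[8] (a, b) = (a, b) := by
  rw [show (rho1 m)^[8] = (rho1 m)^[2+(2+(2+2))] from rfl, Function.iterate_add_apply,
    Function.iterate_add_apply, Function.iterate_add_apply]
  rw [nstep1 hm a b ha hb, nstep1 hm a _ ha (by rw [p2]; omega),
    nstep1 hm a _ ha (by rw [p2, p2]; omega), nstep1 hm a _ ha (by rw [p2, p2, p2]; omega),
    Prod.mk.injEq]
  exact ⟨rfl, (by decide : ∀ c : ZMod 8, c+2+2+2+2 = c) b⟩

lemma norm2 (hm : 5 ≤ m) (a : ZMod m) (b : ZMod 8) (ha : 4 ≤ a.val) (hb : b.val % 2 = 1) :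
    (rho2 m)^[8] (a, b) = (a, b) := by
  rw [show (rho2 m)^[8] = (rho2 m)^[2+(2+(2+2))] from rfl, Function.iterate_add_apply,
    Function.iterate_add_apply, Function.iterate_add_apply]
  rw [nstep2 hm a b ha hb, nstep2 hm a _ ha (by rw [p2]; omega),
    nstep2 hm a _ ha (by rw [p2, p2]; omega), nstep2 hm a _ ha (by rw [p2, p2, p2]; omega),
    Prod.mk.injEq]
  exact ⟨rfl, (by decide : ∀ c : ZMod 8, c+2+2+2+2 = c) b⟩

lemma hper1 (hm : 5 ≤ m) : ∀ x, (rho1 m)^[8] x = x := by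
  haveI : NeZero m := neZ hm
  rintro ⟨c, d⟩
  have hcv := ZMod.val_lt c
  have hS := vsub1 hm c
  rcases (show d.val % 2 = 0 ∨ d.val % 2 = 1 by omega) with hd | hd
  · rcases (show c.val = 0 ∨ c.val = 1 ∨ c.val = 2 ∨ c.val = 3 ∨ 4 ≤ c.val by omega)
      with hc|hc|hc|hc|hc
    · have hc' : c = 0 := by have := aeq hm hc; simpa using this
      subst hc'
      exact (chain1 hm d hd).1
    · have hc' : c = 1 := by have := aeq hm hc; simpa using this
      subst hc'
      have he : (d+4).val % 2 = 0 := by rw [p4]; omega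
      have hx := (chain1 hm (d+4) he).2.1
      rw [(by decide : ∀ c : ZMod 8, c+4+4 = c) d] at hx
      exact per_transport (chain1 hm (d+4) he).1 hx
    · have hc' : c = 2 := by have := aeq hm hc; simpa using this
      subst hc'
      exact per_transport (chain1 hm d hd).1 (chain1 hm d hd).2.2.1
    · have hc' : c = 3 := by have := aeq hm hc; simpa using this
      subst hc'
      have he : (d+4).val % 2 = 0 := by rw [p4]; omega
      have hx := (chain1 hm (d+4) he).2.2.2.1
      rw [(by decide : ∀ c : ZMod 8, c+4+4 = c) d] at hx
      exact per_transport (chain1 hm (d+4) he).1 hx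
    · exact norm1 hm c d hc hd
  · rcases (show c.val = 1 ∨ c.val = 2 ∨ c.val = 3 ∨ c.val = 4 ∨
        (c.val = 0 ∨ 5 ≤ c.val) by omega) with hc|hc|hc|hc|hc
    · have hc' : c = 1 := by have := aeq hm hc; simpa using this
      subst hc'
      have he : (d+1).val % 2 = 0 := by rw [p1]; omega
      have hx := (chain1 hm (d+1) he).2.2.2.2.2.2.2
      rw [(by decide : ∀ c : ZMod 8, c+1+7 = c) d] at hx
      exact per_transport (chain1 hm (d+1) he).1 hx
    · have hc' : c = 2 := by have := aeq hm hc; simpa using this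
      subst hc'
      have he : (d+5).val % 2 = 0 := by rw [p5]; omega
      have hx := (chain1 hm (d+5) he).2.2.2.2.2.2.1
      rw [(by decide : ∀ c : ZMod 8, c+5+3 = c) d] at hx
      exact per_transport (chain1 hm (d+5) he).1 hx
    · have hc' : c = 3 := by have := aeq hm hc; simpa using this
      subst hc'
      have he : (d+1).val % 2 = 0 := by rw [p1]; omega
      have hx := (chain1 hm (d+1) he).2.2.2.2.2.1
      rw [(by decide : ∀ c : ZMod 8, c+1+7 = c) d] at hx
      exact per_transport (chain1 hm (d+1) he).1 hx
    · have hc' : c = 4 := by have := aeq hm hc; simpa using this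
      subst hc'
      have he : (d+5).val % 2 = 0 := by rw [p5]; omega
      have hx := (chain1 hm (d+5) he).2.2.2.2.1
      rw [(by decide : ∀ c : ZMod 8, c+5+3 = c) d] at hx
      exact per_transport (chain1 hm (d+5) he).1 hx
    · have hsv : 4 ≤ (c-1).val := by rw [hS]; split_ifs <;> omega
      have hp : (d+7).val % 2 = 0 := by rw [p7]; omega
      have hx : (rho1 m)^[1] (c-1, d+7) = (c, d) := by
        rw [Function.iterate_one, r1_even_hi hp hsv, Prod.mk.injEq]
        exact ⟨by ring, (by decide : ∀ c : ZMod 8, c+7+1 = c) d⟩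
      exact per_transport (norm1 hm (c-1) (d+7) hsv hp) hx

lemma hper2 (hm : 5 ≤ m) : ∀ x, (rho2 m)^[8] x = x := by
  haveI : NeZero m := neZ hm
  rintro ⟨c, d⟩
  have hcv := ZMod.val_lt c
  have hS := vsub1 hm c
  rcases (show d.val % 2 = 1 ∨ d.val % 2 = 0 by omega) with hd | hd
  · rcases (show c.val = 0 ∨ c.val = 1 ∨ c.val = 2 ∨ c.val = 3 ∨ 4 ≤ c.val by omega)
      with hc|hc|hc|hc|hc
    · have hc' : c = 0 := by have := aeq hm hc; simpa using this
      subst hc'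
      exact (chain2 hm d hd).1
    · have hc' : c = 1 := by have := aeq hm hc; simpa using this
      subst hc'
      have he : (d+4).val % 2 = 1 := by rw [p4]; omega
      have hx := (chain2 hm (d+4) he).2.1
      rw [(by decide : ∀ c : ZMod 8, c+4+4 = c) d] at hx
      exact per_transport (chain2 hm (d+4) he).1 hx
    · have hc' : c = 2 := by have := aeq hm hc; simpa using this
      subst hc'
      have he : (d+2).val % 2 = 1 := by rw [p2]; omega
      have hx := (chain2 hm (d+2) he).2.2.2.2.2.2.1
      rw [(by decide : ∀ c : ZMod 8, c+2+6 = c) d] at hx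
      exact per_transport (chain2 hm (d+2) he).1 hx
    · have hc' : c = 3 := by have := aeq hm hc; simpa using this
      subst hc'
      have he : (d+6).val % 2 = 1 := by rw [p6]; omega
      have hx := (chain2 hm (d+6) he).2.2.2.1
      rw [(by decide : ∀ c : ZMod 8, c+6+2 = c) d] at hx
      exact per_transport (chain2 hm (d+6) he).1 hx
    · exact norm2 hm c d hc hd
  · rcases (show c.val = 1 ∨ c.val = 2 ∨ c.val = 3 ∨ c.val = 4 ∨
        (c.val = 0 ∨ 5 ≤ c.val) by omega) with hc|hc|hc|hc|hc
    · have hc' : c = 1 := by have := aeq hm hc; simpa using this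
      subst hc'
      have he : (d+1).val % 2 = 1 := by rw [p1]; omega
      have hx := (chain2 hm (d+1) he).2.2.2.2.2.2.2
      rw [(by decide : ∀ c : ZMod 8, c+1+7 = c) d] at hx
      exact per_transport (chain2 hm (d+1) he).1 hx
    · have hc' : c = 2 := by have := aeq hm hc; simpa using this
      subst hc'
      have he : (d+5).val % 2 = 1 := by rw [p5]; omega
      have hx := (chain2 hm (d+5) he).2.2.1
      rw [(by decide : ∀ c : ZMod 8, c+5+3 = c) d] at hx
      exact per_transport (chain2 hm (d+5) he).1 hx
    · have hc' : c = 3 := by have := aeq hm hc; simpa using this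
      subst hc'
      have he : (d+3).val % 2 = 1 := by rw [p3]; omega
      have hx := (chain2 hm (d+3) he).2.2.2.2.2.1
      rw [(by decide : ∀ c : ZMod 8, c+3+5 = c) d] at hx
      exact per_transport (chain2 hm (d+3) he).1 hx
    · have hc' : c = 4 := by have := aeq hm hc; simpa using this
      subst hc'
      have he : (d+7).val % 2 = 1 := by rw [p7]; omega
      have hx := (chain2 hm (d+7) he).2.2.2.2.1
      rw [(by decide : ∀ c : ZMod 8, c+7+1 = c) d] at hx
      exact per_transport (chain2 hm (d+7) he).1 hx
    · have hsv : 4 ≤ (c-1).val := by rw [hS]; split_ifs <;> omega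
      have hp : (d+7).val % 2 = 1 := by rw [p7]; omega
      have hx : (rho2 m)^[1] (c-1, d+7) = (c, d) := by
        rw [Function.iterate_one, r2_odd_hi hp hsv, Prod.mk.injEq]
        exact ⟨by ring, (by decide : ∀ c : ZMod 8, c+7+1 = c) d⟩
      exact per_transport (norm2 hm (c-1) (d+7) hsv hp) hx

end Pers
section Cover
variable {m : ℕ}

lemma H1hyp (hm : 5 ≤ m) : CycHyp (rho1 m) 8 (theta1 m) :=
  ⟨htheta1 hm, hper1 hm, by omega, by decide⟩

lemma H2hyp (hm : 5 ≤ m) : CycHyp (rho2 m) 8 (theta2 m) :=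
  ⟨htheta2 hm, hper2 hm, by omega, by decide⟩

lemma H0hyp (hm : 5 ≤ m) (hmo : Odd m) : CycHyp (rho0 m) m (theta0 m) :=
  ⟨fun _ => rfl, hper0 hm hmo, by omega, two_ne hm⟩

lemma hne1 (hm : 5 ≤ m) (a : ZMod m) : a ≠ a + 1 := by
  intro h
  have h3 : (0 : ZMod m) = 1 := by linear_combination h
  have h4 := congrArg ZMod.val h3
  rw [v0 hm, v1 hm] at h4
  omega

lemma neR (hm : 5 ≤ m) (a : ZMod m) (b t : ZMod 8) :
    ((a, b) : ZMod m × ZMod 8) ≠ (a + 1, b + t) := by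
  intro h
  exact hne1 hm a (congrArg Prod.fst h)

lemma r1_odd_01hi {a : ZMod m} {b : ZMod 8} (hb : b.val % 2 = 1)
    (ha : a.val ≤ 1 ∨ 5 ≤ a.val) : rho1 m (a, b) = (a - 1, b + 1) := by
  rcases ha with h | h
  · exact r1_odd_lo hb h
  · exact r1_odd_hi hb h

lemma r0_lo {a : ZMod m} {b : ZMod 8} (ha : a.val ≤ 3) : rho0 m (a, b) = (a+1, b+1) := by
  unfold rho0 s0; rw [if_pos ha]

lemma r0_hi {a : ZMod m} {b : ZMod 8} (ha : ¬ a.val ≤ 3) : rho0 m (a, b) = (a+1, b+4) := by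
  unfold rho0 s0; rw [if_neg ha]

lemma coverR (hm : 5 ≤ m) (hmo : Odd m) (a : ZMod m) (b t : ZMod 8)
    (ht : t = 1 ∨ t = -1 ∨ t = 4) :
    (cycG (rho0 m)).Adj (a, b) (a+1, b+t) ∨ (cycG (rho1 m)).Adj (a, b) (a+1, b+t) ∨
      (cycG (rho2 m)).Adj (a, b) (a+1, b+t) := by
  haveI : NeZero m := neZ hm
  have H0 := H0hyp hm hmo
  have H1 := H1hyp hm
  have H2 := H2hyp hm
  have hav := ZMod.val_lt a
  have hA := vadd1 hm a
  have hne := neR hm a b t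
  have hm1 : (-1 : ZMod 8) = 7 := by decide
  rcases ht with rfl | rfl | rfl
  -- t = 1
  · rcases (show a.val ≤ 3 ∨ ¬ a.val ≤ 3 by omega) with ha | ha
    · exact Or.inl (H0.adj_iff.2 ⟨hne, Or.inl (r0_lo ha).symm⟩)
    · rcases (show b.val % 2 = 0 ∨ b.val % 2 = 1 by omega) with hb | hb
      · exact Or.inr (Or.inl (H1.adj_iff.2 ⟨hne, Or.inl (r1_even_hi hb (by omega)).symm⟩))
      · exact Or.inr (Or.inr (H2.adj_iff.2 ⟨hne, Or.inl (r2_odd_hi hb (by omega)).symm⟩))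
  -- t = -1  (b + -1 = b + 7)
  · rw [hm1]
    have hne7 := neR hm a b 7
    rcases (show b.val % 2 = 0 ∨ b.val % 2 = 1 by omega) with hb | hb
    · -- b even, y = (a+1, b+7) with b+7 odd
      have hp : (b+7).val % 2 = 1 := by rw [p7]; omega
      rcases (show a.val = 0 ∨ a.val = 1 ∨ a.val = 2 ∨ a.val = 3 ∨ 4 ≤ a.val by omega)
        with ha|ha|ha|ha|ha
      · -- F1 : x = rho1 y, (a+1).val = 1
        have h1 : (a+1).val = 1 := by rw [hA, if_neg (by omega)]; omega
        have hy : rho1 m (a+1, b+7) = (a, b) := by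
          rw [r1_odd_lo hp (by omega), Prod.mk.injEq]
          exact ⟨by ring, (by decide : ∀ c : ZMod 8, c+7+1 = c) b⟩
        exact Or.inr (Or.inl (H1.adj_iff.2 ⟨hne7, Or.inr hy.symm⟩))
      · -- F2 : x = rho2 y, (a+1).val = 2, b+7 odd : r2_odd_2
        have h1 : (a+1).val = 2 := by rw [hA, if_neg (by omega)]; omega
        have hy : rho2 m (a+1, b+7) = (a, b) := by
          rw [r2_odd_2 hp h1, Prod.mk.injEq]
          exact ⟨by ring, (by decide : ∀ c : ZMod 8, c+7+1 = c) b⟩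
        exact Or.inr (Or.inr (H2.adj_iff.2 ⟨hne7, Or.inr hy.symm⟩))
      · -- F2 : y = rho2 x (r2_even_2)
        exact Or.inr (Or.inr (H2.adj_iff.2 ⟨hne7, Or.inl (r2_even_2 hb ha).symm⟩))
      · -- F1 : y = rho1 x (r1_even_3)
        exact Or.inr (Or.inl (H1.adj_iff.2 ⟨hne7, Or.inl (r1_even_3 hb ha).symm⟩))
      · -- F1 : x = rho1 y, (a+1).val ≤ 1 ∨ ≥ 5
        have h1 : (a+1).val ≤ 1 ∨ 5 ≤ (a+1).val := by rw [hA]; split_ifs <;> omega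
        have hy : rho1 m (a+1, b+7) = (a, b) := by
          rw [r1_odd_01hi hp h1, Prod.mk.injEq]
          exact ⟨by ring, (by decide : ∀ c : ZMod 8, c+7+1 = c) b⟩
        exact Or.inr (Or.inl (H1.adj_iff.2 ⟨hne7, Or.inr hy.symm⟩))
    · -- b odd, y = (a+1, b+7) with b+7 even
      have hp : (b+7).val % 2 = 0 := by rw [p7]; omega
      rcases (show a.val = 0 ∨ a.val = 1 ∨ a.val = 2 ∨ a.val = 3 ∨ 4 ≤ a.val by omega)
        with ha|ha|ha|ha|ha
      · -- F2 : x = rho2 y, (a+1).val = 1 : r2_even_oth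
        have h1 : (a+1).val = 1 := by rw [hA, if_neg (by omega)]; omega
        have hy : rho2 m (a+1, b+7) = (a, b) := by
          rw [r2_even_oth hp (by omega) (by omega), Prod.mk.injEq]
          exact ⟨by ring, (by decide : ∀ c : ZMod 8, c+7+1 = c) b⟩
        exact Or.inr (Or.inr (H2.adj_iff.2 ⟨hne7, Or.inr hy.symm⟩))
      · -- F2 : y = rho2 x (r2_odd_13 inl)
        exact Or.inr (Or.inr (H2.adj_iff.2 ⟨hne7, Or.inl (r2_odd_13 hb (Or.inl ha)).symm⟩))
      · -- F2 : x = rho2 y, (a+1).val = 3 : r2_even_oth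
        have h1 : (a+1).val = 3 := by rw [hA, if_neg (by omega)]; omega
        have hy : rho2 m (a+1, b+7) = (a, b) := by
          rw [r2_even_oth hp (by omega) (by omega), Prod.mk.injEq]
          exact ⟨by ring, (by decide : ∀ c : ZMod 8, c+7+1 = c) b⟩
        exact Or.inr (Or.inr (H2.adj_iff.2 ⟨hne7, Or.inr hy.symm⟩))
      · -- F2 : y = rho2 x (r2_odd_13 inr)
        exact Or.inr (Or.inr (H2.adj_iff.2 ⟨hne7, Or.inl (r2_odd_13 hb (Or.inr ha)).symm⟩))
      · -- F2 : x = rho2 y, (a+1).val = 0 ∨ ≥ 5 : r2_even_oth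
        have h1 : (a+1).val ≠ 2 ∧ (a+1).val ≠ 4 := by rw [hA]; split_ifs <;> omega
        have hy : rho2 m (a+1, b+7) = (a, b) := by
          rw [r2_even_oth hp h1.1 h1.2, Prod.mk.injEq]
          exact ⟨by ring, (by decide : ∀ c : ZMod 8, c+7+1 = c) b⟩
        exact Or.inr (Or.inr (H2.adj_iff.2 ⟨hne7, Or.inr hy.symm⟩))
  -- t = 4
  · rcases (show b.val % 2 = 0 ∨ b.val % 2 = 1 by omega) with hb | hb
    · -- b even
      rcases (show a.val ≤ 2 ∨ a.val = 3 ∨ 4 ≤ a.val by omega) with ha|ha|ha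
      · exact Or.inr (Or.inl (H1.adj_iff.2 ⟨hne, Or.inl (r1_even_lo hb ha).symm⟩))
      · -- F2 : x = rho2 y, (a+1).val = 4, b+4 even : r2_even_4
        have h1 : (a+1).val = 4 := by rw [hA, if_neg (by omega)]; omega
        have hp : (b+4).val % 2 = 0 := by rw [p4]; omega
        have hy : rho2 m (a+1, b+4) = (a, b) := by
          rw [r2_even_4 hp h1, Prod.mk.injEq]
          exact ⟨by ring, (by decide : ∀ c : ZMod 8, c+4+4 = c) b⟩
        exact Or.inr (Or.inr (H2.adj_iff.2 ⟨hne, Or.inr hy.symm⟩))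
      · exact Or.inl (H0.adj_iff.2 ⟨hne, Or.inl (r0_hi (by omega)).symm⟩)
    · -- b odd
      rcases (show a.val = 0 ∨ (1 ≤ a.val ∧ a.val ≤ 3) ∨ 4 ≤ a.val by omega) with ha|ha|ha
      · exact Or.inr (Or.inr (H2.adj_iff.2 ⟨hne, Or.inl (r2_odd_0 hb ha).symm⟩))
      · -- F1 : x = rho1 y, (a+1).val ∈ [2,4], b+4 odd : r1_odd_mid
        have h1 : 2 ≤ (a+1).val ∧ (a+1).val ≤ 4 := by
          constructor <;> (rw [hA, if_neg (by omega)]; omega)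
        have hp : (b+4).val % 2 = 1 := by rw [p4]; omega
        have hy : rho1 m (a+1, b+4) = (a, b) := by
          rw [r1_odd_mid hp h1.1 h1.2, Prod.mk.injEq]
          exact ⟨by ring, (by decide : ∀ c : ZMod 8, c+4+4 = c) b⟩
        exact Or.inr (Or.inl (H1.adj_iff.2 ⟨hne, Or.inr hy.symm⟩))
      · exact Or.inl (H0.adj_iff.2 ⟨hne, Or.inl (r0_hi (by omega)).symm⟩)

end Cover

/-- the connection set -/
def SS (m : ℕ) : Set (ZMod m × ZMod 8) :=
  ({(1 : ZMod m), -1} : Set (ZMod m)) ×ˢ ({1, -1, 4} : Set (ZMod 8))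

section Subs
variable {m : ℕ}

lemma memSR (a : ZMod m) (b u : ZMod 8) (hu : u = 1 ∨ u = -1 ∨ u = 4) :
    ((a+1, b+u) : ZMod m × ZMod 8) - (a, b) ∈ SS m := by
  have h1 : ((a+1, b+u) : ZMod m × ZMod 8) - (a, b) = (1, u) := by
    rw [Prod.mk_sub_mk, Prod.mk.injEq]
    exact ⟨by ring, by ring⟩
  rw [h1]
  refine Set.mem_prod.2 ⟨by simp, ?_⟩
  rcases hu with rfl|rfl|rfl <;> simp

lemma memSL (a : ZMod m) (b u : ZMod 8) (hu : u = 1 ∨ u = -1 ∨ u = 4) :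
    ((a-1, b+u) : ZMod m × ZMod 8) - (a, b) ∈ SS m := by
  have h1 : ((a-1, b+u) : ZMod m × ZMod 8) - (a, b) = (-1, u) := by
    rw [Prod.mk_sub_mk, Prod.mk.injEq]
    exact ⟨by ring, by ring⟩
  rw [h1]
  refine Set.mem_prod.2 ⟨by simp, ?_⟩
  rcases hu with rfl|rfl|rfl <;> simp

lemma h7u : (7 : ZMod 8) = 1 ∨ (7 : ZMod 8) = -1 ∨ (7 : ZMod 8) = 4 := by decide
lemma h1u : (1 : ZMod 8) = 1 ∨ (1 : ZMod 8) = -1 ∨ (1 : ZMod 8) = 4 := by decide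
lemma h4u : (4 : ZMod 8) = 1 ∨ (4 : ZMod 8) = -1 ∨ (4 : ZMod 8) = 4 := by decide

lemma sub0 (hm : 5 ≤ m) : ∀ x : ZMod m × ZMod 8, rho0 m x - x ∈ SS m := by
  rintro ⟨a, b⟩
  rcases (show a.val ≤ 3 ∨ ¬ a.val ≤ 3 by omega) with ha | ha
  · rw [r0_lo ha]; exact memSR a b 1 h1u
  · rw [r0_hi ha]; exact memSR a b 4 h4u

lemma sub1 (hm : 5 ≤ m) : ∀ x : ZMod m × ZMod 8, rho1 m x - x ∈ SS m := by
  haveI : NeZero m := neZ hm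
  rintro ⟨a, b⟩
  have hav := ZMod.val_lt a
  rcases (show b.val % 2 = 0 ∨ b.val % 2 = 1 by omega) with hb | hb
  · rcases (show a.val ≤ 2 ∨ a.val = 3 ∨ 4 ≤ a.val by omega) with ha|ha|ha
    · rw [r1_even_lo hb ha]; exact memSR a b 4 h4u
    · rw [r1_even_3 hb ha]; exact memSR a b 7 h7u
    · rw [r1_even_hi hb ha]; exact memSR a b 1 h1u
  · rcases (show a.val ≤ 1 ∨ (2 ≤ a.val ∧ a.val ≤ 4) ∨ 5 ≤ a.val by omega) with ha|ha|ha
    · rw [r1_odd_lo hb ha]; exact memSL a b 1 h1u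
    · rw [r1_odd_mid hb ha.1 ha.2]; exact memSL a b 4 h4u
    · rw [r1_odd_hi hb ha]; exact memSL a b 1 h1u

lemma sub2 (hm : 5 ≤ m) : ∀ x : ZMod m × ZMod 8, rho2 m x - x ∈ SS m := by
  haveI : NeZero m := neZ hm
  rintro ⟨a, b⟩
  have hav := ZMod.val_lt a
  rcases (show b.val % 2 = 1 ∨ b.val % 2 = 0 by omega) with hb | hb
  · rcases (show a.val = 2 ∨ a.val = 0 ∨ (a.val = 1 ∨ a.val = 3) ∨ 4 ≤ a.val by omega)
      with ha|ha|ha|ha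
    · rw [r2_odd_2 hb ha]; exact memSL a b 1 h1u
    · rw [r2_odd_0 hb ha]; exact memSR a b 4 h4u
    · rw [r2_odd_13 hb ha]; exact memSR a b 7 h7u
    · rw [r2_odd_hi hb ha]; exact memSR a b 1 h1u
  · rcases (show a.val = 2 ∨ a.val = 4 ∨ (a.val ≠ 2 ∧ a.val ≠ 4) by omega) with ha|ha|ha
    · rw [r2_even_2 hb ha]; exact memSR a b 7 h7u
    · rw [r2_even_4 hb ha]; exact memSL a b 4 h4u
    · rw [r2_even_oth hb ha.1 ha.2]; exact memSL a b 1 h1u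

lemma le_cay0 (hm : 5 ≤ m) (hmo : Odd m) : cycG (rho0 m) ≤ cay m 8 (SS m) := by
  intro x y h
  rw [(H0hyp hm hmo).adj_iff] at h
  obtain ⟨hne, h | h⟩ := h
  · exact (SimpleGraph.fromRel_adj _ x y).2 ⟨hne, Or.inr (by rw [h]; exact sub0 hm x)⟩
  · exact (SimpleGraph.fromRel_adj _ x y).2 ⟨hne, Or.inl (by rw [h]; exact sub0 hm y)⟩

lemma le_cay1 (hm : 5 ≤ m) : cycG (rho1 m) ≤ cay m 8 (SS m) := by
  intro x y h
  rw [(H1hyp hm).adj_iff] at h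
  obtain ⟨hne, h | h⟩ := h
  · exact (SimpleGraph.fromRel_adj _ x y).2 ⟨hne, Or.inr (by rw [h]; exact sub1 hm x)⟩
  · exact (SimpleGraph.fromRel_adj _ x y).2 ⟨hne, Or.inl (by rw [h]; exact sub1 hm y)⟩

lemma le_cay2 (hm : 5 ≤ m) : cycG (rho2 m) ≤ cay m 8 (SS m) := by
  intro x y h
  rw [(H2hyp hm).adj_iff] at h
  obtain ⟨hne, h | h⟩ := h
  · exact (SimpleGraph.fromRel_adj _ x y).2 ⟨hne, Or.inr (by rw [h]; exact sub2 hm x)⟩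
  · exact (SimpleGraph.fromRel_adj _ x y).2 ⟨hne, Or.inl (by rw [h]; exact sub2 hm y)⟩

lemma negS : ∀ u : ZMod 8, (u = 1 ∨ u = -1 ∨ u = 4) → (-u = 1 ∨ -u = -1 ∨ -u = 4) := by decide

lemma cover (hm : 5 ≤ m) (hmo : Odd m) : ∀ x y : ZMod m × ZMod 8,
    (cay m 8 (SS m)).Adj x y →
    (cycG (rho0 m)).Adj x y ∨ (cycG (rho1 m)).Adj x y ∨ (cycG (rho2 m)).Adj x y := by
  have main : ∀ u v : ZMod m × ZMod 8, v - u ∈ SS m →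
      (cycG (rho0 m)).Adj u v ∨ (cycG (rho1 m)).Adj u v ∨ (cycG (rho2 m)).Adj u v := by
    rintro ⟨u1, u2⟩ ⟨v1, v2⟩ huv
    rw [Prod.mk_sub_mk] at huv
    obtain ⟨hf, hs⟩ := Set.mem_prod.1 huv
    simp only [Set.mem_insert_iff, Set.mem_singleton_iff] at hf hs
    rcases hf with hf | hf
    · have hv : ((u1 + 1, u2 + (v2 - u2)) : ZMod m × ZMod 8) = (v1, v2) := by
        rw [Prod.mk.injEq]
        exact ⟨by linear_combination -hf, by ring⟩
      have := coverR hm hmo u1 u2 (v2 - u2) hs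
      rwa [hv] at this
    · have hu : ((v1 + 1, v2 + (u2 - v2)) : ZMod m × ZMod 8) = (u1, u2) := by
        rw [Prod.mk.injEq]
        exact ⟨by linear_combination hf, by ring⟩
      have h2 := coverR hm hmo v1 v2 (u2 - v2)
        (by have := negS (v2 - u2) hs; rwa [show -(v2 - u2) = u2 - v2 from by ring] at this)
      rw [hu] at h2
      rcases h2 with h | h | h
      · exact Or.inl h.symm
      · exact Or.inr (Or.inl h.symm)
      · exact Or.inr (Or.inr h.symm)
  intro x y h
  obtain ⟨hne, h | h⟩ := (SimpleGraph.fromRel_adj _ x y).1 h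
  · rcases main y x h with h2 | h2 | h2
    · exact Or.inl h2.symm
    · exact Or.inr (Or.inl h2.symm)
    · exact Or.inr (Or.inr h2.symm)
  · exact main x y h

end Subs

section Final
variable {m : ℕ}

lemma hneL (hm : 5 ≤ m) (a : ZMod m) (b t : ZMod 8) :
    ((a, b) : ZMod m × ZMod 8) ≠ (a - 1, b + t) := by
  intro h
  have h1 : a = a - 1 := congrArg Prod.fst h
  have h3 : (0 : ZMod m) = 1 := by linear_combination -h1
  have h4 := congrArg ZMod.val h3
  rw [v0 hm, v1 hm] at h4
  omega

lemma cay_nbhd (hm : 5 ≤ m) (x : ZMod m × ZMod 8) :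
    (cay m 8 (SS m)).neighborSet x =
      {(x.1+1, x.2+1), (x.1+1, x.2+7), (x.1+1, x.2+4),
       (x.1-1, x.2+1), (x.1-1, x.2+7), (x.1-1, x.2+4)} := by
  haveI : NeZero m := neZ hm
  obtain ⟨x1, x2⟩ := x
  have h8 : (8 : ZMod 8) = 0 := by decide
  ext y
  simp only [SimpleGraph.mem_neighborSet]
  constructor
  · intro h
    obtain ⟨y1, y2⟩ := y
    obtain ⟨hne, h | h⟩ := (SimpleGraph.fromRel_adj _ _ _).1 h
    · rw [Prod.mk_sub_mk] at h
      obtain ⟨hf, hs⟩ := Set.mem_prod.1 h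
      simp only [Set.mem_insert_iff, Set.mem_singleton_iff] at hf hs ⊢
      simp only [Prod.mk.injEq]
      have hy1 : y1 = x1 + 1 ∨ y1 = x1 - 1 := by
        rcases hf with h' | h'
        · exact Or.inr (by linear_combination -h')
        · exact Or.inl (by linear_combination -h')
      have hy2 : y2 = x2 + 1 ∨ y2 = x2 + 7 ∨ y2 = x2 + 4 := by
        rcases hs with h' | h' | h'
        · exact Or.inr (Or.inl (by linear_combination -h' - h8))
        · exact Or.inl (by linear_combination -h')
        · exact Or.inr (Or.inr (by linear_combination -h' - h8))
      rcases hy1 with rfl | rfl <;> rcases hy2 with rfl | rfl | rfl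
      · exact Or.inl ⟨rfl, rfl⟩
      · exact Or.inr (Or.inl ⟨rfl, rfl⟩)
      · exact Or.inr (Or.inr (Or.inl ⟨rfl, rfl⟩))
      · exact Or.inr (Or.inr (Or.inr (Or.inl ⟨rfl, rfl⟩)))
      · exact Or.inr (Or.inr (Or.inr (Or.inr (Or.inl ⟨rfl, rfl⟩))))
      · exact Or.inr (Or.inr (Or.inr (Or.inr (Or.inr ⟨rfl, rfl⟩))))
    · rw [Prod.mk_sub_mk] at h
      obtain ⟨hf, hs⟩ := Set.mem_prod.1 h
      simp only [Set.mem_insert_iff, Set.mem_singleton_iff] at hf hs ⊢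
      simp only [Prod.mk.injEq]
      have hy1 : y1 = x1 + 1 ∨ y1 = x1 - 1 := by
        rcases hf with h' | h'
        · exact Or.inl (by linear_combination h')
        · exact Or.inr (by linear_combination h')
      have hy2 : y2 = x2 + 1 ∨ y2 = x2 + 7 ∨ y2 = x2 + 4 := by
        rcases hs with h' | h' | h'
        · exact Or.inl (by linear_combination h')
        · exact Or.inr (Or.inl (by linear_combination h' - h8))
        · exact Or.inr (Or.inr (by linear_combination h'))
      rcases hy1 with rfl | rfl <;> rcases hy2 with rfl | rfl | rfl
      · exact Or.inl ⟨rfl, rfl⟩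
      · exact Or.inr (Or.inl ⟨rfl, rfl⟩)
      · exact Or.inr (Or.inr (Or.inl ⟨rfl, rfl⟩))
      · exact Or.inr (Or.inr (Or.inr (Or.inl ⟨rfl, rfl⟩)))
      · exact Or.inr (Or.inr (Or.inr (Or.inr (Or.inl ⟨rfl, rfl⟩))))
      · exact Or.inr (Or.inr (Or.inr (Or.inr (Or.inr ⟨rfl, rfl⟩))))
  · intro h
    simp only [Set.mem_insert_iff, Set.mem_singleton_iff] at h
    rcases h with rfl | rfl | rfl | rfl | rfl | rfl
    · exact (SimpleGraph.fromRel_adj _ _ _).2 ⟨neR hm x1 x2 1, Or.inr (memSR x1 x2 1 h1u)⟩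
    · exact (SimpleGraph.fromRel_adj _ _ _).2 ⟨neR hm x1 x2 7, Or.inr (memSR x1 x2 7 h7u)⟩
    · exact (SimpleGraph.fromRel_adj _ _ _).2 ⟨neR hm x1 x2 4, Or.inr (memSR x1 x2 4 h4u)⟩
    · exact (SimpleGraph.fromRel_adj _ _ _).2 ⟨hneL hm x1 x2 1, Or.inr (memSL x1 x2 1 h1u)⟩
    · exact (SimpleGraph.fromRel_adj _ _ _).2 ⟨hneL hm x1 x2 7, Or.inr (memSL x1 x2 7 h7u)⟩
    · exact (SimpleGraph.fromRel_adj _ _ _).2 ⟨hneL hm x1 x2 4, Or.inr (memSL x1 x2 4 h4u)⟩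

lemma d17 : ∀ c : ZMod 8, c + 1 ≠ c + 7 := by decide
lemma d14 : ∀ c : ZMod 8, c + 1 ≠ c + 4 := by decide
lemma d74 : ∀ c : ZMod 8, c + 7 ≠ c + 4 := by decide

lemma cay_deg (hm : 5 ≤ m) (x : ZMod m × ZMod 8) :
    ((cay m 8 (SS m)).neighborSet x).ncard = 6 := by
  haveI : NeZero m := neZ hm
  rw [cay_nbhd hm x]
  have hf : x.1 + 1 ≠ x.1 - 1 := by
    intro h
    exact two_ne hm (by linear_combination h)
  have hf' : x.1 - 1 ≠ x.1 + 1 := hf.symm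
  rw [Set.ncard_insert_of_notMem (by simp [Prod.mk.injEq, hf, d17 x.2, d14 x.2]),
    Set.ncard_insert_of_notMem (by simp [Prod.mk.injEq, hf, d74 x.2, (d17 x.2).symm]),
    Set.ncard_insert_of_notMem (by simp [Prod.mk.injEq, hf, (d14 x.2).symm, (d74 x.2).symm]),
    Set.ncard_insert_of_notMem (by simp [Prod.mk.injEq, hf', d17 x.2, d14 x.2]),
    Set.ncard_insert_of_notMem (by simp [Prod.mk.injEq, hf', d74 x.2]),
    Set.ncard_singleton]

lemma count3 {α : Type*} {A B C U : Set α} (hUf : U.Finite)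
    (hA : A ⊆ U) (hB : B ⊆ U) (hC : C ⊆ U) (hcov : U ⊆ A ∪ B ∪ C)
    (ha : A.ncard = 2) (hb : B.ncard = 2) (hc : C.ncard = 2) (hu : U.ncard = 6) :
    A ∩ B = ∅ ∧ A ∩ C = ∅ ∧ B ∩ C = ∅ := by
  have hAf := hUf.subset hA
  have hBf := hUf.subset hB
  have hCf := hUf.subset hC
  have e1 : A ∪ B ∪ C = U :=
    subset_antisymm (Set.union_subset (Set.union_subset hA hB) hC) hcov
  have h1 := Set.ncard_union_add_ncard_inter A B hAf hBf
  have h2 := Set.ncard_union_add_ncard_inter (A ∪ B) C (hAf.union hBf) hCf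
  rw [e1, hu, hc] at h2
  rw [ha, hb] at h1
  have hABC : ((A ∪ B) ∩ C).ncard = 0 ∧ (A ∪ B).ncard = 4 := by omega
  have hAB : (A ∩ B).ncard = 0 := by omega
  have eAB : A ∩ B = ∅ := (Set.ncard_eq_zero (hAf.inter_of_left B)).1 hAB
  have eABC : (A ∪ B) ∩ C = ∅ :=
    (Set.ncard_eq_zero ((hAf.union hBf).inter_of_left C)).1 hABC.1
  refine ⟨eAB, ?_, ?_⟩
  · apply Set.eq_empty_of_subset_empty
    rw [← eABC]
    exact Set.inter_subset_inter_left C Set.subset_union_left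
  · apply Set.eq_empty_of_subset_empty
    rw [← eABC]
    exact Set.inter_subset_inter_left C Set.subset_union_right

end Final

theorem stmt_6 (m : ℕ) (hm : 5 ≤ m) (hmo : Odd m) :
    CycleDecomp
      (cay m 8 (({(1 : ZMod m), -1} : Set (ZMod m)) ×ˢ
        ({1, -1, 4} : Set (ZMod 8))))
      (fun i : Fin 3 => if (i : ℕ) < 2 then 8 else m) := by
  haveI : NeZero m := neZ hm
  show CycleDecomp (cay m 8 (SS m)) _
  refine ⟨fun i => if (i : ℕ) = 0 then cycG (rho1 m) else if (i : ℕ) = 1 then cycG (rho2 m)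
    else cycG (rho0 m), ?_, ?_⟩
  · intro i
    have hlt := i.isLt
    rcases (show (i : ℕ) = 0 ∨ (i : ℕ) = 1 ∨ (i : ℕ) = 2 by omega) with h | h | h
    · simp only [h, if_pos rfl]
      rw [if_pos (by omega : (0:ℕ) < 2)]
      exact ⟨le_cay1 hm, (H1hyp hm).deg, (H1hyp hm).supp_ncard⟩
    · simp only [h, if_neg (by omega : ¬ (1:ℕ) = 0), if_pos rfl]
      rw [if_pos (by omega : (1:ℕ) < 2)]
      exact ⟨le_cay2 hm, (H2hyp hm).deg, (H2hyp hm).supp_ncard⟩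
    · simp only [h, if_neg (by omega : ¬ (2:ℕ) = 0), if_neg (by omega : ¬ (2:ℕ) = 1)]
      rw [if_neg (by omega : ¬ (2:ℕ) < 2)]
      exact ⟨le_cay0 hm hmo, (H0hyp hm hmo).deg, (H0hyp hm hmo).supp_ncard⟩
  · intro e he
    revert he
    induction e using Sym2.ind with
    | _ x y =>
      intro he
      rw [SimpleGraph.mem_edgeSet] at he
      have hsub1 : (cycG (rho1 m)).neighborSet x ⊆ (cay m 8 (SS m)).neighborSet x :=
        fun z hz => le_cay1 hm hz
      have hsub2 : (cycG (rho2 m)).neighborSet x ⊆ (cay m 8 (SS m)).neighborSet x :=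
        fun z hz => le_cay2 hm hz
      have hsub0 : (cycG (rho0 m)).neighborSet x ⊆ (cay m 8 (SS m)).neighborSet x :=
        fun z hz => le_cay0 hm hmo hz
      have hcov : (cay m 8 (SS m)).neighborSet x ⊆
          (cycG (rho1 m)).neighborSet x ∪ (cycG (rho2 m)).neighborSet x ∪
            (cycG (rho0 m)).neighborSet x := by
        intro z hz
        rcases cover hm hmo x z hz with h | h | h
        · exact Set.mem_union_right _ h
        · exact Set.mem_union_left _ (Set.mem_union_left _ h)
        · exact Set.mem_union_left _ (Set.mem_union_right _ h)
      obtain ⟨h12, h10, h20⟩ := count3 (Set.toFinite _) hsub1 hsub2 hsub0 hcov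
        ((H1hyp hm).deg x) ((H2hyp hm).deg x) ((H0hyp hm hmo).deg x) (cay_deg hm x)
      have hmem : ∀ {A : Set (ZMod m × ZMod 8)}, A = ∅ → y ∉ A := by
        rintro A rfl h; exact h
      rcases cover hm hmo x y he with h | h | h
      · -- rho0 : index 2
        refine ⟨2, ?_, ?_⟩
        · show s(x, y) ∈ (if (2:ℕ) = 0 then cycG (rho1 m) else if (2:ℕ) = 1 then cycG (rho2 m)
            else cycG (rho0 m)).edgeSet
          rw [if_neg (by omega), if_neg (by omega)]
          exact (SimpleGraph.mem_edgeSet _).2 h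
        · intro j hj
          have hlt := j.isLt
          rcases (show (j : ℕ) = 0 ∨ (j : ℕ) = 1 ∨ (j : ℕ) = 2 by omega) with hv | hv | hv
          · exfalso
            simp only [hv, if_pos rfl] at hj
            rw [SimpleGraph.mem_edgeSet] at hj
            exact hmem h10 (Set.mem_inter hj h)
          · exfalso
            simp only [hv, if_neg (by omega : ¬ (1:ℕ) = 0), if_pos rfl] at hj
            rw [SimpleGraph.mem_edgeSet] at hj
            exact hmem h20 (Set.mem_inter hj h)
          · exact Fin.ext (by rw [hv]; rfl)
      · -- rho1 : index 0
        refine ⟨0, ?_, ?_⟩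
        · show s(x, y) ∈ (if (0:ℕ) = 0 then cycG (rho1 m) else if (0:ℕ) = 1 then cycG (rho2 m)
            else cycG (rho0 m)).edgeSet
          rw [if_pos rfl]
          exact (SimpleGraph.mem_edgeSet _).2 h
        · intro j hj
          have hlt := j.isLt
          rcases (show (j : ℕ) = 0 ∨ (j : ℕ) = 1 ∨ (j : ℕ) = 2 by omega) with hv | hv | hv
          · exact Fin.ext (by rw [hv]; rfl)
          · exfalso
            simp only [hv, if_neg (by omega : ¬ (1:ℕ) = 0), if_pos rfl] at hj
            rw [SimpleGraph.mem_edgeSet] at hj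
            exact hmem h12 (Set.mem_inter h hj)
          · exfalso
            simp only [hv, if_neg (by omega : ¬ (2:ℕ) = 0),
              if_neg (by omega : ¬ (2:ℕ) = 1)] at hj
            rw [SimpleGraph.mem_edgeSet] at hj
            exact hmem h10 (Set.mem_inter h hj)
      · -- rho2 : index 1
        refine ⟨1, ?_, ?_⟩
        · show s(x, y) ∈ (if (1:ℕ) = 0 then cycG (rho1 m) else if (1:ℕ) = 1 then cycG (rho2 m)
            else cycG (rho0 m)).edgeSet
          rw [if_neg (by omega), if_pos rfl]
          exact (SimpleGraph.mem_edgeSet _).2 h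
        · intro j hj
          have hlt := j.isLt
          rcases (show (j : ℕ) = 0 ∨ (j : ℕ) = 1 ∨ (j : ℕ) = 2 by omega) with hv | hv | hv
          · exfalso
            simp only [hv, if_pos rfl] at hj
            rw [SimpleGraph.mem_edgeSet] at hj
            exact hmem h12 (Set.mem_inter hj h)
          · exact Fin.ext (by rw [hv]; rfl)
          · exfalso
            simp only [hv, if_neg (by omega : ¬ (2:ℕ) = 0),
              if_neg (by omega : ¬ (2:ℕ) = 1)] at hj
            rw [SimpleGraph.mem_edgeSet] at hj
            exact hmem h20 (Set.mem_inter h hj)
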